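/- arXiv:2110.12576 — 3 statements merged into one kernel-verified Lean document; each statement's English description precedes it below -/
import Mathlib

section
/- Let G = (V,E) be a connected 3-regular finite simple undirected graph and let S be a nonempty proper subset of V. Then λ(S) ≤ 3, with equality if and only if S is a vertex cover of G. -/
open Matrix

/-- The grounded Laplacian matrix `L(S)`: the principal submatrix of the Laplacian matrix
`L = D - A` of `G` obtained by deleting the rows and columns indexed by the vertices in `S`. -/
noncomputable def groundedLaplacian {V : Type*} [Fintype V] [DecidableEq V]
    (G : SimpleGraph V) (S : Finset V) :
    Matrix {v : V // v ∉ S} {v : V // v ∉ S} ℝ :=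
  letI := Classical.decRel G.Adj
  Matrix.of fun i j => G.lapMatrix ℝ i.val j.val

/-- `λ(S)`: the smallest eigenvalue of the grounded Laplacian matrix `L(S)`. -/
noncomputable def lambdaMin {V : Type*} [Fintype V] [DecidableEq V]
    (G : SimpleGraph V) (S : Finset V) : ℝ :=
  sInf (spectrum ℝ (groundedLaplacian G S))

/-- The degree of a vertex (with a classical decidability instance). -/
noncomputable def gDegree {V : Type*} [Fintype V] (G : SimpleGraph V) (v : V) : ℕ :=
  letI := Classical.decRel G.Adj
  G.degree v

lemma sum_eigenvalues_eq_trace' {n : Type*} [Fintype n] [DecidableEq n] {A : Matrix n n ℝ}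
    (hA : A.IsHermitian) : ∑ i, hA.eigenvalues i = A.trace := by
  conv_rhs => rw [hA.spectral_theorem]
  rw [Unitary.conjStarAlgAut_apply, Matrix.trace_mul_cycle]
  rw [(Matrix.mem_unitaryGroup_iff').mp (Matrix.IsHermitian.eigenvectorUnitary hA).2]
  simp [Matrix.trace_diagonal]

lemma eq_smul_one_of_eigenvalues_const {n : Type*} [Fintype n] [DecidableEq n]
    {A : Matrix n n ℝ} (hA : A.IsHermitian) (c : ℝ) (h : ∀ i, hA.eigenvalues i = c) :
    A = c • (1 : Matrix n n ℝ) := by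
  have hd : Matrix.diagonal (RCLike.ofReal ∘ hA.eigenvalues) = c • (1 : Matrix n n ℝ) := by
    ext i j
    by_cases hij : i = j
    · subst hij; simp [h i]
    · simp [Matrix.diagonal_apply_ne _ hij, Matrix.one_apply_ne hij]
  conv_lhs => rw [hA.spectral_theorem, hd]
  rw [Unitary.conjStarAlgAut_apply, Matrix.mul_smul, Matrix.smul_mul, Matrix.mul_one,
    (Matrix.mem_unitaryGroup_iff).mp (Matrix.IsHermitian.eigenvectorUnitary hA).2]

lemma eigenvalues_const_of_eq_smul_one {n : Type*} [Fintype n] [DecidableEq n]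
    {A : Matrix n n ℝ} (hA : A.IsHermitian) (c : ℝ) (h : A = c • (1 : Matrix n n ℝ)) :
    ∀ i, hA.eigenvalues i = c := by
  intro i
  haveI : Nonempty n := ⟨i⟩
  have hmem : hA.eigenvalues i ∈ spectrum ℝ A := hA.eigenvalues_mem_spectrum_real i
  have hsp : spectrum ℝ A = {c} := by
    rw [h, ← Algebra.algebraMap_eq_smul_one]
    exact spectrum.scalar_eq c
  rw [hsp] at hmem
  exact hmem

/-- For a connected 3-regular graph and a nonempty proper subset `S` of the vertices,
`λ(S) ≤ 3`, with equality if and only if `S` is a vertex cover of `G`. -/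
theorem lambdaMin_le_three_iff_vertexCover {V : Type*} [Fintype V] [DecidableEq V]
    (G : SimpleGraph V) (hconn : G.Connected) (hreg : ∀ v : V, gDegree G v = 3)
    (S : Finset V) (hne : S.Nonempty) (hproper : S ≠ Finset.univ) :
    lambdaMin G S ≤ 3 ∧
      (lambdaMin G S = 3 ↔ ∀ v w : V, G.Adj v w → v ∈ S ∨ w ∈ S) := by

  classical
  letI := Classical.decRel G.Adj
  haveI : Nonempty {v : V // v ∉ S} := by
    by_contra hempty
    apply hproper
    apply Finset.eq_univ_iff_forall.mpr
    intro v
    by_contra hv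
    exact hempty ⟨⟨v, hv⟩⟩
  set L := groundedLaplacian G S with hLdef
  have hL : L.IsHermitian := by
    have hsym : (G.lapMatrix ℝ)ᵀ = G.lapMatrix ℝ := SimpleGraph.isSymm_lapMatrix (R := ℝ) G
    ext i j
    simp only [Matrix.conjTranspose_apply, hLdef, groundedLaplacian, Matrix.of_apply,
      star_trivial]
    exact congr_fun (congr_fun hsym i.1) j.1
  have hdiag : ∀ i : {v : V // v ∉ S}, L i i = 3 := by
    intro i
    have h3 := hreg i.1
    simp only [gDegree] at h3
    simp only [hLdef, groundedLaplacian, Matrix.of_apply, SimpleGraph.lapMatrix,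
      SimpleGraph.degMatrix, Matrix.sub_apply, Matrix.diagonal_apply_eq,
      SimpleGraph.adjMatrix_apply, SimpleGraph.irrefl, if_false]
    rw [h3]
    norm_num
  have hoff : ∀ i j : {v : V // v ∉ S}, i ≠ j →
      L i j = if G.Adj i.1 j.1 then (-1 : ℝ) else 0 := by
    intro i j hij
    have hij' : i.1 ≠ j.1 := fun h => hij (Subtype.ext h)
    simp only [hLdef, groundedLaplacian, Matrix.of_apply, SimpleGraph.lapMatrix,
      SimpleGraph.degMatrix, Matrix.sub_apply, Matrix.diagonal_apply_ne _ hij',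
      SimpleGraph.adjMatrix_apply]
    split_ifs <;> ring
  have hspec : spectrum ℝ L = Set.range hL.eigenvalues := hL.spectrum_real_eq_range_eigenvalues
  have hlam : lambdaMin G S = sInf (Set.range hL.eigenvalues) := by
    rw [lambdaMin, ← hspec]
  have hbdd : BddBelow (Set.range hL.eigenvalues) := (Set.finite_range _).bddBelow
  have hsum : ∑ i, hL.eigenvalues i = 3 * (Fintype.card {v : V // v ∉ S} : ℝ) := by
    rw [sum_eigenvalues_eq_trace', Matrix.trace]
    simp only [Matrix.diag_apply, hdiag]
    rw [Finset.sum_const, Finset.card_univ, nsmul_eq_mul, mul_comm]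
  -- Part 1 : lambdaMin ≤ 3
  have hexist : ∃ i, hL.eigenvalues i ≤ 3 := by
    by_contra hno
    push_neg at hno
    have : (3 : ℝ) * (Fintype.card {v : V // v ∉ S} : ℝ) < ∑ i, hL.eigenvalues i := by
      calc (3 : ℝ) * (Fintype.card {v : V // v ∉ S} : ℝ)
          = ∑ _i : {v : V // v ∉ S}, (3 : ℝ) := by
            rw [Finset.sum_const, Finset.card_univ, nsmul_eq_mul, mul_comm]
        _ < ∑ i, hL.eigenvalues i := by
            exact Finset.sum_lt_sum_of_nonempty Finset.univ_nonempty (fun i _ => hno i)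
    rw [hsum] at this
    exact lt_irrefl _ this
  obtain ⟨i0, hi0⟩ := hexist
  have hle3 : lambdaMin G S ≤ 3 := by
    rw [hlam]
    exact le_trans (csInf_le hbdd ⟨i0, rfl⟩) hi0
  refine ⟨hle3, ?_, ?_⟩
  · -- lambdaMin = 3 → vertex cover
    intro heq
    have hge : ∀ i, 3 ≤ hL.eigenvalues i := by
      intro i
      have := csInf_le hbdd ⟨i, rfl⟩
      rw [← hlam, heq] at this
      exact this
    have hall : ∀ i, hL.eigenvalues i = 3 := by
      by_contra hno
      push_neg at hno
      obtain ⟨i, hi⟩ := hno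
      have hlt : (3 : ℝ) * (Fintype.card {v : V // v ∉ S} : ℝ) < ∑ i, hL.eigenvalues i := by
        calc (3 : ℝ) * (Fintype.card {v : V // v ∉ S} : ℝ)
            = ∑ _i : {v : V // v ∉ S}, (3 : ℝ) := by
              rw [Finset.sum_const, Finset.card_univ, nsmul_eq_mul, mul_comm]
          _ < ∑ i, hL.eigenvalues i := by
              refine Finset.sum_lt_sum (fun j _ => hge j) ⟨i, Finset.mem_univ i, ?_⟩
              exact lt_of_le_of_ne (hge i) (Ne.symm hi)
      rw [hsum] at hlt
      exact lt_irrefl _ hlt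
    have hL1 : L = (3 : ℝ) • (1 : Matrix _ _ ℝ) := eq_smul_one_of_eigenvalues_const hL 3 hall
    intro v w hadj
    by_contra hvw
    push_neg at hvw
    obtain ⟨hv, hw⟩ := hvw
    set i : {v : V // v ∉ S} := ⟨v, hv⟩
    set j : {v : V // v ∉ S} := ⟨w, hw⟩
    have hij : i ≠ j := fun h => G.ne_of_adj hadj (congrArg Subtype.val h)
    have h1 : L i j = -1 := by rw [hoff i j hij, if_pos hadj]
    have h2 : L i j = 0 := by
      rw [hL1]
      simp [Matrix.one_apply_ne hij]
    rw [h1] at h2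
    norm_num at h2
  · -- vertex cover → lambdaMin = 3
    intro hcov
    have hL1 : L = (3 : ℝ) • (1 : Matrix _ _ ℝ) := by
      ext i j
      by_cases hij : i = j
      · subst hij
        rw [hdiag i]
        simp
      · rw [hoff i j hij]
        have hnadj : ¬ G.Adj i.1 j.1 := by
          intro hadj
          rcases hcov i.1 j.1 hadj with h | h
          · exact i.2 h
          · exact j.2 h
        rw [if_neg hnadj]
        simp [Matrix.one_apply_ne hij]
    have hall := eigenvalues_const_of_eq_smul_one hL 3 hL1
    rw [hlam]
    have : Set.range hL.eigenvalues = {3} := by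
      rw [show hL.eigenvalues = fun _ => (3:ℝ) from funext hall]
      exact Set.range_const
    rw [this, csInf_singleton]
end

section
/- Let G = (V,E) be a connected 3-regular finite simple undirected graph on n vertices and let k be an integer with 1 ≤ k < n. Then there exists a subset S ⊆ V with |S| = k and λ(S) ≥ 3 if and only if G has a vertex cover of cardinality k. (This is the correctness of the polynomial reduction from Vertex Cover on 3-regular graphs used to prove that maximizing the smallest eigenvalue of the grounded Laplacian subject to a cardinality constraint is NP-hard.) -/
open Matrix

section Aux

variable {V : Type*} [Fintype V] [DecidableEq V] (G : SimpleGraph V) (S : Finset V)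

lemma gl_apply (i j : {v : V // v ∉ S}) :
    groundedLaplacian G S i j =
      letI := Classical.decRel G.Adj
      (if i.val = j.val then (G.degree i.val : ℝ) else 0) -
        (if G.Adj i.val j.val then 1 else 0) := by
  letI := Classical.decRel G.Adj
  simp [groundedLaplacian, SimpleGraph.lapMatrix, SimpleGraph.degMatrix, Matrix.diagonal,
    SimpleGraph.adjMatrix]

lemma gl_diag (hreg : ∀ v : V, gDegree G v = 3) (i : {v : V // v ∉ S}) :
    groundedLaplacian G S i i = 3 := by
  rw [gl_apply]
  have : (letI := Classical.decRel G.Adj; G.degree i.val) = gDegree G i.val := rfl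
  simp only [if_pos rfl, if_neg (G.irrefl), sub_zero, this, hreg]
  norm_num

lemma gl_offdiag_adj {i j : {v : V // v ∉ S}} (h : G.Adj i.val j.val) :
    groundedLaplacian G S i j = -1 := by
  rw [gl_apply]
  simp only [if_neg h.ne, if_pos h]
  norm_num

lemma gl_isHermitian : (groundedLaplacian G S).IsHermitian := by
  letI := Classical.decRel G.Adj
  ext i j
  have := congrFun (congrFun (G.isSymm_lapMatrix (R := ℝ)) j.val) i.val
  simpa [groundedLaplacian, Matrix.conjTranspose_apply, Matrix.transpose_apply] using this.symm

/-- easy direction: if the complement of `S` is independent, `λ(S) = 3`. -/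
lemma lambdaMin_eq_three (hreg : ∀ v : V, gDegree G v = 3)
    (hne : ∃ v : V, v ∉ S)
    (hind : ∀ v w : V, v ∉ S → w ∉ S → ¬ G.Adj v w) :
    lambdaMin G S = 3 := by
  have hNE : Nonempty {v : V // v ∉ S} := ⟨⟨hne.choose, hne.choose_spec⟩⟩
  have hM : groundedLaplacian G S = Matrix.diagonal (fun _ => (3 : ℝ)) := by
    ext i j
    rcases eq_or_ne i j with rfl | hij
    · rw [gl_diag G S hreg]; simp
    · have hval : i.val ≠ j.val := fun h => hij (Subtype.ext h)
      rw [gl_apply]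
      simp [hval, hind i.val j.val i.2 j.2, Matrix.diagonal_apply_ne _ hij]
  rw [lambdaMin, hM, spectrum_diagonal, Set.range_const, csInf_singleton]

/-- hard direction: if `λ(S) ≥ 3` then `S` is a vertex cover. -/
lemma cover_of_lambdaMin (hreg : ∀ v : V, gDegree G v = 3)
    (h3 : 3 ≤ lambdaMin G S) :
    ∀ v w : V, G.Adj v w → v ∈ S ∨ w ∈ S := by
  intro v w hvw
  by_contra hc
  push_neg at hc
  obtain ⟨hv, hw⟩ := hc
  set m := {u : V // u ∉ S}
  set M := groundedLaplacian G S with hMdef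
  have hM : M.IsHermitian := gl_isHermitian G S
  set a : m := ⟨v, hv⟩
  set b : m := ⟨w, hw⟩
  have hab : a ≠ b := fun h => hvw.ne (congrArg Subtype.val h)
  -- all eigenvalues are ≥ 3
  have heig : ∀ i : m, (3 : ℝ) ≤ hM.eigenvalues i := by
    intro i
    refine le_trans h3 (csInf_le ?_ ?_)
    · exact (Matrix.finite_spectrum M).bddBelow
    · exact hM.eigenvalues_mem_spectrum_real i
  -- test vector
  set x : m → ℝ := Pi.single a 1 + Pi.single b 1 with hx
  set U : Matrix m m ℝ := (hM.eigenvectorUnitary : Matrix m m ℝ) with hUdef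
  have hU1 : U * star U = 1 := (Unitary.mem_iff.mp hM.eigenvectorUnitary.2).2
  set y : m → ℝ := star U *ᵥ x with hy
  have hspec : M = U * Matrix.diagonal hM.eigenvalues * star U := by
    have h := hM.spectral_theorem
    have : (RCLike.ofReal ∘ hM.eigenvalues : m → ℝ) = hM.eigenvalues := by
      ext i; simp
    rw [this] at h
    exact h
  have hstarU : star U = Uᵀ := by
    rw [Matrix.star_eq_conjTranspose, Matrix.conjTranspose_eq_transpose_of_trivial]
  have hxU : x ᵥ* U = y := by
    rw [hy, hstarU, Matrix.mulVec_transpose]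
  -- quadratic form equals sum over eigenvalues
  have hq1 : x ⬝ᵥ (M *ᵥ x) = ∑ i : m, hM.eigenvalues i * (y i) ^ 2 := by
    rw [show x ⬝ᵥ (M *ᵥ x) = x ⬝ᵥ ((U * Matrix.diagonal hM.eigenvalues * star U) *ᵥ x) from
      congrArg (fun N => x ⬝ᵥ (N *ᵥ x)) hspec]
    rw [← Matrix.mulVec_mulVec, ← Matrix.mulVec_mulVec, Matrix.dotProduct_mulVec, hxU]
    simp only [dotProduct, Matrix.mulVec_diagonal, ← hy]
    congr 1; ext i; ring
  -- norm is preserved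
  have hq2 : y ⬝ᵥ y = x ⬝ᵥ x := by
    calc y ⬝ᵥ y = (y ᵥ* star U) ⬝ᵥ x := by rw [hy, Matrix.dotProduct_mulVec]
    _ = (U *ᵥ y) ⬝ᵥ x := by rw [hstarU, Matrix.vecMul_transpose]
    _ = ((U * star U) *ᵥ x) ⬝ᵥ x := by rw [hy, Matrix.mulVec_mulVec]
    _ = x ⬝ᵥ x := by rw [hU1, Matrix.one_mulVec]
  have hxx : x ⬝ᵥ x = 2 := by
    simp [hx, dotProduct_add, add_dotProduct, dotProduct_single,
      single_dotProduct, Pi.single_apply, hab, hab.symm]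
    norm_num
  -- compute quadratic form directly: it equals 4
  have hq4 : x ⬝ᵥ (M *ᵥ x) = 4 := by
    have hMab : M a b = -1 := gl_offdiag_adj G S hvw
    have hMba : M b a = -1 := gl_offdiag_adj G S hvw.symm
    have hMaa : M a a = 3 := gl_diag G S hreg a
    have hMbb : M b b = 3 := gl_diag G S hreg b
    rw [hx]
    simp only [Matrix.mulVec_add, Matrix.mulVec_single_one, dotProduct_add,
      add_dotProduct, single_dotProduct, Pi.add_apply, mul_one, one_mul, Matrix.col_apply]
    rw [hMaa, hMbb, hMab, hMba]
    norm_num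
  -- but eigenvalue bound forces it to be ≥ 6
  have hge : (6 : ℝ) ≤ x ⬝ᵥ (M *ᵥ x) := by
    rw [hq1]
    have : ∑ i : m, (3 : ℝ) * (y i) ^ 2 ≤ ∑ i : m, hM.eigenvalues i * (y i) ^ 2 :=
      Finset.sum_le_sum fun i _ => mul_le_mul_of_nonneg_right (heig i) (sq_nonneg _)
    refine le_trans ?_ this
    have hyy : ∑ i : m, (y i) ^ 2 = 2 := by
      rw [← hxx, ← hq2]; simp [dotProduct, sq]
    rw [← Finset.mul_sum, hyy]; norm_num
  rw [hq4] at hge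
  norm_num at hge

end Aux

/-- Correctness of the reduction from Vertex Cover on connected 3-regular graphs: for
`1 ≤ k < |V|`, there exists a `k`-element set `S` of grounded nodes with `λ(S) ≥ 3` if and only
if `G` has a vertex cover of cardinality `k`. -/
theorem exists_lambdaMin_ge_three_iff_vertexCover {V : Type*} [Fintype V] [DecidableEq V]
    (G : SimpleGraph V) (hconn : G.Connected) (hreg : ∀ v : V, gDegree G v = 3)
    (k : ℕ) (hk1 : 1 ≤ k) (hkn : k < Fintype.card V) :
    (∃ S : Finset V, S.card = k ∧ 3 ≤ lambdaMin G S) ↔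
      (∃ C : Finset V, C.card = k ∧ ∀ v w : V, G.Adj v w → v ∈ C ∨ w ∈ C) := by
  constructor
  · rintro ⟨S, hcard, h3⟩
    exact ⟨S, hcard, cover_of_lambdaMin G S hreg h3⟩
  · rintro ⟨C, hcard, hcov⟩
    refine ⟨C, hcard, ?_⟩
    have hne : ∃ v : V, v ∉ C := by
      by_contra h
      push_neg at h
      have : C = Finset.univ := Finset.eq_univ_iff_forall.mpr h
      rw [this, Finset.card_univ] at hcard
      omega
    have hind : ∀ v w : V, v ∉ C → w ∉ C → ¬ G.Adj v w := by
      intro v w hv hw hadj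
      rcases hcov v w hadj with h | h
      · exact hv h
      · exact hw h
    rw [lambdaMin_eq_three G C hreg hne hind]
end

section
/- Let P₇ be the path graph on vertex set {1,2,3,4,5,6,7} with edges {i, i+1} for i = 1,…,6. Let A = {1}, B = {1,2}, and v = 6. Then λ(A ∪ {v}) − λ(A) < λ(B ∪ {v}) − λ(B). Consequently, the set function S ↦ λ(S) is not submodular: it is not true that for all graphs G and all S ⊆ T ⊆ V and u ∈ V, λ(S ∪ {u}) − λ(S) ≥ λ(T ∪ {u}) − λ(T). -/
open Matrix

/-- The path graph `P₇` on the vertex set `{1,…,7}` (encoded as `Fin 7`, so that paper vertex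
`i` corresponds to `(i-1 : Fin 7)`), with edges `{i, i+1}` for `i = 1,…,6`. -/
def P7 : SimpleGraph (Fin 7) :=
  SimpleGraph.fromRel (fun i j => (i : ℕ) + 1 = (j : ℕ))

/-! ### Auxiliary machinery -/

lemma mem_spec_iff {n m : Type*} [Fintype n] [DecidableEq n] [Fintype m] [DecidableEq m]
    (e : m ≃ n) (M : Matrix n n ℝ) (μ : ℝ) :
    μ ∈ spectrum ℝ M ↔ (Matrix.diagonal (fun _ : m => μ) - M.submatrix e e).det = 0 := by
  rw [spectrum.mem_iff, Matrix.isUnit_iff_isUnit_det, isUnit_iff_ne_zero, not_not,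
    ← Matrix.det_submatrix_equiv_self e, Matrix.submatrix_sub]
  congr! 2
  ext i j
  simp [Matrix.algebraMap_matrix_apply, Matrix.diagonal_apply, Matrix.submatrix_apply,
    e.injective.eq_iff]

instance P7.instDec : DecidableRel P7.Adj := fun a b =>
  decidable_of_iff (a ≠ b ∧ ((a : ℕ) + 1 = b ∨ (b : ℕ) + 1 = a))
    (by rw [P7, SimpleGraph.fromRel_adj])

lemma P7_adj (a b : Fin 7) : P7.Adj a b ↔ a ≠ b ∧ ((a : ℕ) + 1 = b ∨ (b : ℕ) + 1 = a) := by
  rw [P7, SimpleGraph.fromRel_adj]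

lemma degP7 (v : Fin 7) : P7.degree v = if v = 0 ∨ v = 6 then 1 else 2 := by
  revert v; decide

/-- Explicit form of the Laplacian matrix of `P7`. -/
def M7 : Matrix (Fin 7) (Fin 7) ℝ := fun i j =>
  if i = j then (if i = 0 ∨ i = 6 then 1 else 2)
  else if (i : ℕ) + 1 = j ∨ (j : ℕ) + 1 = i then -1 else 0

lemma lapP7 : P7.lapMatrix ℝ = M7 := by
  ext i j
  rw [SimpleGraph.lapMatrix]
  fin_cases i <;> fin_cases j <;>
    norm_num [SimpleGraph.degMatrix, Matrix.diagonal_apply, degP7, M7, P7_adj]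

lemma grounded_apply (S : Finset (Fin 7)) (i j : {v : Fin 7 // v ∉ S}) :
    groundedLaplacian P7 S i j = M7 i.val j.val := by
  simp only [groundedLaplacian, Matrix.of_apply]
  rw [Subsingleton.elim (Classical.decRel P7.Adj) P7.instDec, lapP7]

/-! ### Enumerations of the complements of the four vertex sets -/

def eA : Fin 6 ≃ {v : Fin 7 // v ∉ ({0} : Finset (Fin 7))} where
  toFun i := ⟨![1, 2, 3, 4, 5, 6] i, by fin_cases i <;> decide⟩
  invFun v := ![0, 0, 1, 2, 3, 4, 5] v.val
  left_inv i := by fin_cases i <;> rfl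
  right_inv v := by
    rcases v with ⟨x, hx⟩
    fin_cases x <;> first | rfl | (exfalso; revert hx; decide)

def eAv : Fin 5 ≃ {v : Fin 7 // v ∉ (insert 5 {0} : Finset (Fin 7))} where
  toFun i := ⟨![1, 2, 3, 4, 6] i, by fin_cases i <;> decide⟩
  invFun v := ![0, 0, 1, 2, 3, 0, 4] v.val
  left_inv i := by fin_cases i <;> rfl
  right_inv v := by
    rcases v with ⟨x, hx⟩
    fin_cases x <;> first | rfl | (exfalso; revert hx; decide)

def eB : Fin 5 ≃ {v : Fin 7 // v ∉ ({0, 1} : Finset (Fin 7))} where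
  toFun i := ⟨![2, 3, 4, 5, 6] i, by fin_cases i <;> decide⟩
  invFun v := ![0, 0, 0, 1, 2, 3, 4] v.val
  left_inv i := by fin_cases i <;> rfl
  right_inv v := by
    rcases v with ⟨x, hx⟩
    fin_cases x <;> first | rfl | (exfalso; revert hx; decide)

def eBv : Fin 4 ≃ {v : Fin 7 // v ∉ (insert 5 {0, 1} : Finset (Fin 7))} where
  toFun i := ⟨![2, 3, 4, 6] i, by fin_cases i <;> decide⟩
  invFun v := ![0, 0, 0, 1, 2, 0, 3] v.val
  left_inv i := by fin_cases i <;> rfl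
  right_inv v := by
    rcases v with ⟨x, hx⟩
    fin_cases x <;> first | rfl | (exfalso; revert hx; decide)

/-! ### The four grounded Laplacians in explicit form -/

section entry_eval

variable {α : Type*}

lemma cv4_0 (a b c d : α) : ![a,b,c,d] (0 : Fin 4) = a := rfl
lemma cv4_1 (a b c d : α) : ![a,b,c,d] (1 : Fin 4) = b := rfl
lemma cv4_2 (a b c d : α) : ![a,b,c,d] (2 : Fin 4) = c := rfl
lemma cv4_3 (a b c d : α) : ![a,b,c,d] (3 : Fin 4) = d := rfl
lemma cv5_0 (a b c d e : α) : ![a,b,c,d,e] (0 : Fin 5) = a := rfl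
lemma cv5_1 (a b c d e : α) : ![a,b,c,d,e] (1 : Fin 5) = b := rfl
lemma cv5_2 (a b c d e : α) : ![a,b,c,d,e] (2 : Fin 5) = c := rfl
lemma cv5_3 (a b c d e : α) : ![a,b,c,d,e] (3 : Fin 5) = d := rfl
lemma cv5_4 (a b c d e : α) : ![a,b,c,d,e] (4 : Fin 5) = e := rfl
lemma cv6_0 (a b c d e f : α) : ![a,b,c,d,e,f] (0 : Fin 6) = a := rfl
lemma cv6_1 (a b c d e f : α) : ![a,b,c,d,e,f] (1 : Fin 6) = b := rfl
lemma cv6_2 (a b c d e f : α) : ![a,b,c,d,e,f] (2 : Fin 6) = c := rfl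
lemma cv6_3 (a b c d e f : α) : ![a,b,c,d,e,f] (3 : Fin 6) = d := rfl
lemma cv6_4 (a b c d e f : α) : ![a,b,c,d,e,f] (4 : Fin 6) = e := rfl
lemma cv6_5 (a b c d e f : α) : ![a,b,c,d,e,f] (5 : Fin 6) = f := rfl

end entry_eval

lemma fv0 : ((0 : Fin 7) : ℕ) = 0 := rfl
lemma fv1 : ((1 : Fin 7) : ℕ) = 1 := rfl
lemma fv2 : ((2 : Fin 7) : ℕ) = 2 := rfl
lemma fv3 : ((3 : Fin 7) : ℕ) = 3 := rfl
lemma fv4 : ((4 : Fin 7) : ℕ) = 4 := rfl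
lemma fv5 : ((5 : Fin 7) : ℕ) = 5 := rfl
lemma fv6 : ((6 : Fin 7) : ℕ) = 6 := rfl

lemma hMA (μ : ℝ) :
    Matrix.diagonal (fun _ : Fin 6 => μ) - (groundedLaplacian P7 {0}).submatrix eA eA =
    !![μ-2,1,0,0,0,0; 1,μ-2,1,0,0,0; 0,1,μ-2,1,0,0; 0,0,1,μ-2,1,0; 0,0,0,1,μ-2,1;
       0,0,0,0,1,μ-1] := by
  ext i j
  fin_cases i <;> fin_cases j <;>
    norm_num [Matrix.diagonal_apply, Matrix.submatrix_apply, grounded_apply, M7, eA,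
      Fin.ext_iff, cv4_0, cv4_1, cv4_2, cv4_3, cv5_0, cv5_1, cv5_2, cv5_3, cv5_4,
      cv6_0, cv6_1, cv6_2, cv6_3, cv6_4, cv6_5, fv0, fv1, fv2, fv3, fv4, fv5, fv6,
      Matrix.cons_val_zero, Matrix.cons_val_one,
      Matrix.head_cons, Matrix.vecHead, Matrix.vecTail]

lemma hMAv (μ : ℝ) :
    Matrix.diagonal (fun _ : Fin 5 => μ) -
      (groundedLaplacian P7 (insert 5 {0})).submatrix eAv eAv =
    !![μ-2,1,0,0,0; 1,μ-2,1,0,0; 0,1,μ-2,1,0; 0,0,1,μ-2,0; 0,0,0,0,μ-1] := by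
  ext i j
  fin_cases i <;> fin_cases j <;>
    norm_num [Matrix.diagonal_apply, Matrix.submatrix_apply, grounded_apply, M7, eAv,
      Fin.ext_iff, cv4_0, cv4_1, cv4_2, cv4_3, cv5_0, cv5_1, cv5_2, cv5_3, cv5_4,
      cv6_0, cv6_1, cv6_2, cv6_3, cv6_4, cv6_5, fv0, fv1, fv2, fv3, fv4, fv5, fv6,
      Matrix.cons_val_zero, Matrix.cons_val_one,
      Matrix.head_cons, Matrix.vecHead, Matrix.vecTail]

lemma hMB (μ : ℝ) :
    Matrix.diagonal (fun _ : Fin 5 => μ) - (groundedLaplacian P7 {0, 1}).submatrix eB eB =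
    !![μ-2,1,0,0,0; 1,μ-2,1,0,0; 0,1,μ-2,1,0; 0,0,1,μ-2,1; 0,0,0,1,μ-1] := by
  ext i j
  fin_cases i <;> fin_cases j <;>
    norm_num [Matrix.diagonal_apply, Matrix.submatrix_apply, grounded_apply, M7, eB,
      Fin.ext_iff, cv4_0, cv4_1, cv4_2, cv4_3, cv5_0, cv5_1, cv5_2, cv5_3, cv5_4,
      cv6_0, cv6_1, cv6_2, cv6_3, cv6_4, cv6_5, fv0, fv1, fv2, fv3, fv4, fv5, fv6,
      Matrix.cons_val_zero, Matrix.cons_val_one,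
      Matrix.head_cons, Matrix.vecHead, Matrix.vecTail]

lemma hMBv (μ : ℝ) :
    Matrix.diagonal (fun _ : Fin 4 => μ) -
      (groundedLaplacian P7 (insert 5 {0, 1})).submatrix eBv eBv =
    !![μ-2,1,0,0; 1,μ-2,1,0; 0,1,μ-2,0; 0,0,0,μ-1] := by
  ext i j
  fin_cases i <;> fin_cases j <;>
    norm_num [Matrix.diagonal_apply, Matrix.submatrix_apply, grounded_apply, M7, eBv,
      Fin.ext_iff, cv4_0, cv4_1, cv4_2, cv4_3, cv5_0, cv5_1, cv5_2, cv5_3, cv5_4,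
      cv6_0, cv6_1, cv6_2, cv6_3, cv6_4, cv6_5, fv0, fv1, fv2, fv3, fv4, fv5, fv6,
      Matrix.cons_val_zero, Matrix.cons_val_one,
      Matrix.head_cons, Matrix.vecHead, Matrix.vecTail]

/-! ### Characteristic polynomials -/

noncomputable def pA (μ : ℝ) : ℝ := 1 - 21*μ + 70*μ^2 - 84*μ^3 + 45*μ^4 - 11*μ^5 + μ^6
noncomputable def pAv (μ : ℝ) : ℝ := -5 + 25*μ - 41*μ^2 + 29*μ^3 - 9*μ^4 + μ^5
noncomputable def pB (μ : ℝ) : ℝ := -1 + 15*μ - 35*μ^2 + 28*μ^3 - 9*μ^4 + μ^5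
noncomputable def pBv (μ : ℝ) : ℝ := 4 - 14*μ + 16*μ^2 - 7*μ^3 + μ^4

set_option maxHeartbeats 2000000 in
set_option maxRecDepth 8000 in
lemma specA : spectrum ℝ (groundedLaplacian P7 ({0} : Finset (Fin 7))) = {μ : ℝ | pA μ = 0} := by
  ext μ
  rw [mem_spec_iff eA, hMA, Set.mem_setOf_eq]
  constructor <;> intro h <;> [skip; skip] <;>
  · rw [show pA μ = (!![μ-2,1,0,0,0,0; 1,μ-2,1,0,0,0; 0,1,μ-2,1,0,0; 0,0,1,μ-2,1,0;
        0,0,0,1,μ-2,1; 0,0,0,0,1,μ-1] : Matrix (Fin 6) (Fin 6) ℝ).det from by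
      simp [Matrix.det_succ_row_zero, Fin.sum_univ_succ, Fin.succAbove, pA]; ring] at *
    exact h

set_option maxHeartbeats 2000000 in
set_option maxRecDepth 8000 in
lemma specAv : spectrum ℝ (groundedLaplacian P7 (insert 5 {0} : Finset (Fin 7))) =
    {μ : ℝ | pAv μ = 0} := by
  ext μ
  rw [mem_spec_iff eAv, hMAv, Set.mem_setOf_eq]
  constructor <;> intro h <;> [skip; skip] <;>
  · rw [show pAv μ = (!![μ-2,1,0,0,0; 1,μ-2,1,0,0; 0,1,μ-2,1,0; 0,0,1,μ-2,0;
        0,0,0,0,μ-1] : Matrix (Fin 5) (Fin 5) ℝ).det from by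
      simp [Matrix.det_succ_row_zero, Fin.sum_univ_succ, Fin.succAbove, pAv]; ring] at *
    exact h

set_option maxHeartbeats 2000000 in
set_option maxRecDepth 8000 in
lemma specB : spectrum ℝ (groundedLaplacian P7 ({0, 1} : Finset (Fin 7))) =
    {μ : ℝ | pB μ = 0} := by
  ext μ
  rw [mem_spec_iff eB, hMB, Set.mem_setOf_eq]
  constructor <;> intro h <;> [skip; skip] <;>
  · rw [show pB μ = (!![μ-2,1,0,0,0; 1,μ-2,1,0,0; 0,1,μ-2,1,0; 0,0,1,μ-2,1;
        0,0,0,1,μ-1] : Matrix (Fin 5) (Fin 5) ℝ).det from by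
      simp [Matrix.det_succ_row_zero, Fin.sum_univ_succ, Fin.succAbove, pB]; ring] at *
    exact h

set_option maxHeartbeats 2000000 in
set_option maxRecDepth 8000 in
lemma specBv : spectrum ℝ (groundedLaplacian P7 (insert 5 {0, 1} : Finset (Fin 7))) =
    {μ : ℝ | pBv μ = 0} := by
  ext μ
  rw [mem_spec_iff eBv, hMBv, Set.mem_setOf_eq]
  constructor <;> intro h <;> [skip; skip] <;>
  · rw [show pBv μ = (!![μ-2,1,0,0; 1,μ-2,1,0; 0,1,μ-2,0;
        0,0,0,μ-1] : Matrix (Fin 4) (Fin 4) ℝ).det from by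
      simp [Matrix.det_succ_row_zero, Fin.sum_univ_succ, Fin.succAbove, pBv]; ring] at *
    exact h

/-! ### Root location -/

lemma exists_root_dec {f : ℝ → ℝ} (hf : Continuous f) {a b : ℝ} (hab : a ≤ b)
    (h0 : f b ≤ 0) (h1 : 0 ≤ f a) : ∃ x ∈ Set.Icc a b, f x = 0 := by
  have h := intermediate_value_Icc' hab hf.continuousOn (Set.mem_Icc.mpr ⟨h0, h1⟩)
  obtain ⟨x, hx, hfx⟩ := h
  exact ⟨x, hx, hfx⟩

lemma exists_root_inc {f : ℝ → ℝ} (hf : Continuous f) {a b : ℝ} (hab : a ≤ b)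
    (h0 : f a ≤ 0) (h1 : 0 ≤ f b) : ∃ x ∈ Set.Icc a b, f x = 0 := by
  have h := intermediate_value_Icc hab hf.continuousOn (Set.mem_Icc.mpr ⟨h0, h1⟩)
  obtain ⟨x, hx, hfx⟩ := h
  exact ⟨x, hx, hfx⟩

lemma pA_cont : Continuous pA := by unfold pA; fun_prop
lemma pAv_cont : Continuous pAv := by unfold pAv; fun_prop
lemma pB_cont : Continuous pB := by unfold pB; fun_prop
lemma pBv_cont : Continuous pBv := by unfold pBv; fun_prop

lemma pA_lb {μ : ℝ} (h : pA μ = 0) : (1/20 : ℝ) ≤ μ := by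
  by_contra hc
  push_neg at hc
  have ht : (0 : ℝ) < 1/20 - μ := by linarith
  have e : pA μ = 7345781/64000000 + (23372547/1600000)*(1/20 - μ)
      + (1857963/32000)*(1/20 - μ)^2 + (30109/400)*(1/20 - μ)^3 + (3383/80)*(1/20 - μ)^4
      + (107/10)*(1/20 - μ)^5 + (1/20 - μ)^6 := by unfold pA; ring
  nlinarith [pow_pos ht 2, pow_pos ht 3, pow_pos ht 4, pow_pos ht 5, pow_pos ht 6]

lemma pBv_lb {μ : ℝ} (h : pBv μ = 0) : (29/50 : ℝ) ≤ μ := by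
  by_contra hc
  push_neg at hc
  have ht : (0 : ℝ) < 29/50 - μ := by linarith
  have e : pBv μ = 61131/6250000 + (107747/62500)*(29/50 - μ)
      + (3649/625)*(29/50 - μ)^2 + (117/25)*(29/50 - μ)^3 + (29/50 - μ)^4 := by
    unfold pBv; ring
  nlinarith [pow_pos ht 2, pow_pos ht 3, pow_pos ht 4]

lemma pAv_pos_lb {μ : ℝ} (h : pAv μ = 0) : (0 : ℝ) ≤ μ := by
  by_contra hc
  push_neg at hc
  have ht : (0 : ℝ) < -μ := by linarith
  have e : pAv μ = -(5 + 25*(-μ) + 41*(-μ)^2 + 29*(-μ)^3 + 9*(-μ)^4 + (-μ)^5) := by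
    unfold pAv; ring
  nlinarith [pow_pos ht 2, pow_pos ht 3, pow_pos ht 4, pow_pos ht 5]

lemma pB_pos_lb {μ : ℝ} (h : pB μ = 0) : (0 : ℝ) ≤ μ := by
  by_contra hc
  push_neg at hc
  have ht : (0 : ℝ) < -μ := by linarith
  have e : pB μ = -(1 + 15*(-μ) + 35*(-μ)^2 + 28*(-μ)^3 + 9*(-μ)^4 + (-μ)^5) := by
    unfold pB; ring
  nlinarith [pow_pos ht 2, pow_pos ht 3, pow_pos ht 4, pow_pos ht 5]

/-! ### Bounds on the four smallest eigenvalues -/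

lemma lamA_ge : (1/20 : ℝ) ≤ lambdaMin P7 {0} := by
  rw [lambdaMin, specA]
  apply le_csInf
  · obtain ⟨x, hx, hfx⟩ := exists_root_dec pA_cont (by norm_num : (1/20 : ℝ) ≤ 3/50)
      (by unfold pA; norm_num) (by unfold pA; norm_num)
    exact ⟨x, hfx⟩
  · intro b hb
    exact pA_lb hb

lemma lamAv_le : lambdaMin P7 (insert 5 {0}) ≤ 39/100 := by
  rw [lambdaMin, specAv]
  obtain ⟨x, hx, hfx⟩ := exists_root_inc pAv_cont (by norm_num : (0 : ℝ) ≤ 39/100)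
    (by unfold pAv; norm_num) (by unfold pAv; norm_num)
  calc sInf {μ : ℝ | pAv μ = 0} ≤ x := by
        apply csInf_le ⟨0, fun μ hμ => pAv_pos_lb hμ⟩ hfx
    _ ≤ 39/100 := hx.2

lemma lamB_le : lambdaMin P7 {0, 1} ≤ 9/100 := by
  rw [lambdaMin, specB]
  obtain ⟨x, hx, hfx⟩ := exists_root_inc pB_cont (by norm_num : (2/25 : ℝ) ≤ 9/100)
    (by unfold pB; norm_num) (by unfold pB; norm_num)
  calc sInf {μ : ℝ | pB μ = 0} ≤ x := by
        apply csInf_le ⟨0, fun μ hμ => pB_pos_lb hμ⟩ hfx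
    _ ≤ 9/100 := hx.2

lemma lamBv_ge : (29/50 : ℝ) ≤ lambdaMin P7 (insert 5 {0, 1}) := by
  rw [lambdaMin, specBv]
  apply le_csInf
  · obtain ⟨x, hx, hfx⟩ := exists_root_dec pBv_cont (by norm_num : (29/50 : ℝ) ≤ 3/5)
      (by unfold pBv; norm_num) (by unfold pBv; norm_num)
    exact ⟨x, hfx⟩
  · intro b hb
    exact pBv_lb hb

/-- On the path `P₇`, with `A = {1}`, `B = {1,2}` and `v = 6` (paper labels; here shifted to
`{0}`, `{0,1}` and `5` in `Fin 7`), one has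
`λ(A ∪ {v}) − λ(A) < λ(B ∪ {v}) − λ(B)`; consequently the set function `S ↦ λ(S)` is not
submodular. -/
theorem lambdaMin_not_submodular :
    (lambdaMin P7 (insert 5 {0}) - lambdaMin P7 {0} <
      lambdaMin P7 (insert 5 {0, 1}) - lambdaMin P7 {0, 1}) ∧
    ¬ (∀ (W : Type) [Fintype W] [DecidableEq W] (G : SimpleGraph W) (S T : Finset W),
        S ⊆ T → ∀ u : W,
          lambdaMin G (insert u T) - lambdaMin G T ≤
            lambdaMin G (insert u S) - lambdaMin G S) := by
  have hmain : lambdaMin P7 (insert 5 {0}) - lambdaMin P7 {0} <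
      lambdaMin P7 (insert 5 {0, 1}) - lambdaMin P7 {0, 1} := by
    have h1 := lamA_ge
    have h2 := lamAv_le
    have h3 := lamB_le
    have h4 := lamBv_ge
    linarith
  refine ⟨hmain, fun h => ?_⟩
  have := h (Fin 7) P7 {0} {0, 1} (by decide) 5
  linarith
end
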